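/- Let n ≥ 2, 1 < p < n, let H be a gauge on ℝ^n with H smooth on ℝ^n \ {0}, set a(ξ) = H(ξ)^{p−1}∇H(ξ), Ĥ(ξ) = H(−ξ) and â(ξ) = Ĥ(ξ)^{p−1}∇Ĥ(ξ). Let Ω ⊆ ℝ^n be open, f continuous, and let u ∈ C²(Ω) satisfy u(x) > 0 and ∇u(x) ≠ 0 for all x ∈ Ω, and solve div(a(∇u)) + f(u) = 0 pointwise in Ω. Then the function v := u^{−p/(n−p)} solves pointwise in Ω the equation Δ_p^Ĥ v = f̂(v) + (n(p−1)/p)·Ĥ(∇v)^p/v, where Δ_p^Ĥ v = div(â(∇v)) and f̂(t) = (p/(n−p))^{p−1} f(t^{−(n−p)/p}) t^{n(p−1)/p}. -/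

import Mathlib

/-!
Write `v = u ^ (-q)` with `q = p / (n - p)`, so that `∇v = -q u^{-q-1} ∇u`.
Since `Ĥ(ξ) = H(-ξ)` we have `â(ξ) = -a(-ξ)`, and `a` is positively `(p-1)`-homogeneous because
`∇H` is `0`-homogeneous; hence `â(∇v) = -q^{p-1} u^α a(∇u)` with `α = -(q+1)(p-1)`.
The product rule for the divergence and Euler's identity `⟨∇u, a(∇u)⟩ = H(∇u)^p` give
`div â(∇v) = -q^{p-1} u^α div a(∇u) - q^{p-1} α u^{α-1} H(∇u)^p`. Substituting
`div a(∇u) = -f(u)` and expressing `u` through `v` gives the claim; the value of `q` is exactly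
what makes `-α = (n(p-1)/p) q`.
-/

open InnerProductSpace RealInnerProductSpace Filter Topology

section Homogeneous

variable {F : Type*} [NormedAddCommGroup F] [InnerProductSpace ℝ F]

def IsPosHomogeneous (H : F → ℝ) : Prop :=
  ∀ t : ℝ, 0 < t → ∀ ξ : F, H (t • ξ) = t * H ξ

variable {H : F → ℝ}

theorem IsPosHomogeneous.map_zero (hH : IsPosHomogeneous H) : H 0 = 0 := by
  have h := hH 2 two_pos 0
  rw [smul_zero] at h
  linarith

theorem IsPosHomogeneous.nonneg (hH : IsPosHomogeneous H) (hpos : ∀ ξ, ξ ≠ 0 → 0 < H ξ)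
    (ξ : F) : 0 ≤ H ξ := by
  rcases eq_or_ne ξ 0 with rfl | hξ
  · exact hH.map_zero.ge
  · exact (hpos ξ hξ).le

/-- Euler's identity: differentiate `s ↦ H (s • ξ) = s * H ξ` at `s = 1`. -/
theorem IsPosHomogeneous.fderiv_apply_self (hH : IsPosHomogeneous H) {ξ : F}
    (hd : DifferentiableAt ℝ H ξ) : fderiv ℝ H ξ ξ = H ξ := by
  have hray : HasDerivAt (fun s : ℝ => H (s • ξ)) (fderiv ℝ H ξ ξ) 1 := by
    have hs : HasDerivAt (fun s : ℝ => s • ξ) ξ 1 := by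
      simpa using (hasDerivAt_id (1 : ℝ)).smul_const ξ
    have hd' : HasFDerivAt H (fderiv ℝ H ξ) ((1 : ℝ) • ξ) := by
      rw [one_smul]
      exact hd.hasFDerivAt
    exact hd'.comp_hasDerivAt 1 hs
  have hlin : HasDerivAt (fun s : ℝ => H (s • ξ)) (H ξ) 1 := by
    refine (hasDerivAt_mul_const (H ξ)).congr_of_eventuallyEq ?_
    filter_upwards [eventually_gt_nhds one_pos] with s hs
    exact hH s hs ξ
  exact hray.unique hlin

variable [CompleteSpace F]

theorem IsPosHomogeneous.gradient_smul (hH : IsPosHomogeneous H) {t : ℝ} (ht : 0 < t) (ξ : F) :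
    gradient H (t • ξ) = gradient H ξ := by
  have hcomp : (fun y => H (t • y)) = t • H := funext (hH t ht)
  have h := fderiv_comp_smul (f := H) (x := ξ) t
  rw [hcomp, fderiv_const_smul_field, Pi.smul_apply] at h
  rw [gradient, gradient, smul_right_injective _ ht.ne' h]

theorem gradient_comp_neg (ξ : F) : gradient (fun ζ => H (-ζ)) ξ = -gradient H (-ξ) := by
  have h := fderiv_comp_smul (f := H) (x := ξ) (-1 : ℝ)
  simp only [neg_smul, one_smul] at h
  rw [gradient, gradient, h, map_neg]

theorem ContDiffAt.differentiableAt_gradient {f : F → ℝ} {x : F} (hf : ContDiffAt ℝ 2 f x) :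
    DifferentiableAt ℝ (gradient f) x :=
  (toDual ℝ F).symm.toContinuousLinearEquiv.differentiableAt.comp x
    ((hf.fderiv_right (m := 1) (by norm_num)).differentiableAt one_ne_zero)

theorem gradient_comp_of_hasDerivAt {u : F → ℝ} {g : ℝ → ℝ} {g' : ℝ} {x : F}
    (hg : HasDerivAt g g' (u x)) (hu : DifferentiableAt ℝ u x) :
    gradient (fun y => g (u y)) x = g' • gradient u x := by
  rw [gradient, ← Function.comp_def, (hg.comp_hasFDerivAt x hu.hasFDerivAt).fderiv,
    map_smulₛₗ, gradient]
  rfl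

noncomputable def flux (H : F → ℝ) (p : ℝ) (ξ : F) : F :=
  H ξ ^ (p - 1) • gradient H ξ

theorem IsPosHomogeneous.flux_smul (hH : IsPosHomogeneous H) (p : ℝ) {t : ℝ} (ht : 0 < t)
    {ξ : F} (hξ : 0 ≤ H ξ) : flux H p (t • ξ) = t ^ (p - 1) • flux H p ξ := by
  rw [flux, flux, hH t ht, hH.gradient_smul ht, Real.mul_rpow ht.le hξ, mul_smul]

theorem flux_comp_neg (p : ℝ) (ξ : F) : flux (fun ζ => H (-ζ)) p ξ = -flux H p (-ξ) := by
  rw [flux, flux, gradient_comp_neg, smul_neg]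

theorem IsPosHomogeneous.inner_flux (hH : IsPosHomogeneous H) (p : ℝ) {ξ : F}
    (hd : DifferentiableAt ℝ H ξ) (hξ : 0 < H ξ) : ⟪ξ, flux H p ξ⟫ = H ξ ^ p := by
  rw [flux, real_inner_smul_right, real_inner_comm, inner_gradient_left, hH.fderiv_apply_self hd,
    ← Real.rpow_add_one hξ.ne', sub_add_cancel]

theorem ContDiffAt.differentiableAt_flux {ξ : F} (hH : ContDiffAt ℝ 2 H ξ) (p : ℝ)
    (hξ : H ξ ≠ 0) : DifferentiableAt ℝ (flux H p) ξ :=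
  ((hH.differentiableAt two_ne_zero).rpow_const (Or.inl hξ)).smul hH.differentiableAt_gradient

end Homogeneous

theorem rpow_substitution_identity {n p q U h : ℝ} (hp : 0 < p) (hpn : p < n)
    (hq : q = p / (n - p)) (hU : 0 < U) (hh : 0 ≤ h) (f : ℝ → ℝ) :
    -(q ^ (p - 1) * U ^ ((-q - 1) * (p - 1))) * -f U -
        q ^ (p - 1) * ((-q - 1) * (p - 1)) * U ^ ((-q - 1) * (p - 1) - 1) * h ^ p =
      q ^ (p - 1) * f ((U ^ (-q)) ^ (-((n - p) / p))) * (U ^ (-q)) ^ (n * (p - 1) / p) +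
        n * (p - 1) / p * (q * U ^ (-q - 1) * h) ^ p / U ^ (-q) := by
  have hnp : n - p ≠ 0 := (sub_pos.2 hpn).ne'
  have hq0 : 0 < q := hq ▸ div_pos hp (sub_pos.2 hpn)
  have hinv : (U ^ (-q)) ^ (-((n - p) / p)) = U := by
    rw [← Real.rpow_mul hU.le, hq, neg_mul_neg, div_mul_div_cancel₀ hnp, div_self hp.ne',
      Real.rpow_one]
  have hpow : (U ^ (-q)) ^ (n * (p - 1) / p) = U ^ ((-q - 1) * (p - 1)) := by
    rw [← Real.rpow_mul hU.le, hq]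
    congr 1
    field_simp
    ring
  have hquot : (q * U ^ (-q - 1) * h) ^ p / U ^ (-q) =
      q ^ (p - 1) * q * U ^ ((-q - 1) * (p - 1) - 1) * h ^ p := by
    rw [Real.mul_rpow (by positivity) hh, Real.mul_rpow hq0.le (by positivity),
      ← Real.rpow_mul hU.le, ← Real.rpow_add_one hq0.ne', sub_add_cancel, mul_div_right_comm,
      mul_div_assoc, ← Real.rpow_sub hU]
    ring_nf
  have hcoef : n * (p - 1) / p * q = -((-q - 1) * (p - 1)) := by
    rw [hq]
    field_simp
    ring
  rw [hinv, hpow, mul_div_assoc, hquot]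
  linear_combination -(q ^ (p - 1) * U ^ ((-q - 1) * (p - 1) - 1) * h ^ p) * hcoef

section Divergence

variable {ι : Type*} [Fintype ι] [DecidableEq ι]

noncomputable def divergence (A : EuclideanSpace ℝ ι → EuclideanSpace ℝ ι)
    (x : EuclideanSpace ℝ ι) : ℝ :=
  ∑ i, fderiv ℝ (fun y => A y i) x (EuclideanSpace.single i 1)

variable {A B : EuclideanSpace ℝ ι → EuclideanSpace ℝ ι} {x : EuclideanSpace ℝ ι}

theorem Filter.EventuallyEq.divergence_eq (h : A =ᶠ[𝓝 x] B) :
    divergence A x = divergence B x := by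
  refine Finset.sum_congr rfl fun i _ => ?_
  have hi : (fun y => A y i) =ᶠ[𝓝 x] fun y => B y i := h.mono fun y hy => congrArg (· i) hy
  rw [hi.fderiv_eq]

theorem divergence_smul {φ : EuclideanSpace ℝ ι → ℝ} (hφ : DifferentiableAt ℝ φ x)
    (hA : DifferentiableAt ℝ A x) :
    divergence (fun y => φ y • A y) x = φ x * divergence A x + fderiv ℝ φ x (A x) := by
  have hAi (i : ι) : DifferentiableAt ℝ (fun y => A y i) x :=
    (EuclideanSpace.proj (𝕜 := ℝ) i).differentiableAt.comp x hA
  have hexpand : A x = ∑ i, A x i • EuclideanSpace.single i (1 : ℝ) := by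
    simpa using ((EuclideanSpace.basisFun ι ℝ).sum_repr (A x)).symm
  conv_rhs => rw [hexpand]
  simp only [divergence, PiLp.smul_apply, smul_eq_mul, fderiv_fun_mul hφ (hAi _),
    add_apply, smul_apply, map_sum, map_smul, Finset.sum_add_distrib, Finset.mul_sum]

theorem divergence_flux_comp_neg_gradient_rpow {H : EuclideanSpace ℝ ι → ℝ}
    (hH : IsPosHomogeneous H) (hH0 : ∀ ξ, 0 ≤ H ξ) (p : ℝ) {u : EuclideanSpace ℝ ι → ℝ}
    {x : EuclideanSpace ℝ ι} (hu : ContDiffAt ℝ 2 u x) (hux : 0 < u x)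
    (hH2 : ContDiffAt ℝ 2 H (gradient u x)) (hHx : 0 < H (gradient u x)) {q : ℝ} (hq : 0 < q) :
    divergence (fun y => flux (fun ζ => H (-ζ)) p (gradient (fun z => u z ^ (-q)) y)) x =
      -(q ^ (p - 1) * u x ^ ((-q - 1) * (p - 1))) *
          divergence (fun y => flux H p (gradient u y)) x -
        q ^ (p - 1) * ((-q - 1) * (p - 1)) * u x ^ ((-q - 1) * (p - 1) - 1) *
          H (gradient u x) ^ p := by
  set α := (-q - 1) * (p - 1)
  have hflux : (fun y => flux (fun ζ => H (-ζ)) p (gradient (fun z => u z ^ (-q)) y)) =ᶠ[𝓝 x]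
      fun y => (-(q ^ (p - 1) * u y ^ α)) • flux H p (gradient u y) := by
    filter_upwards [hu.eventually (by simp), hu.continuousAt.eventually (lt_mem_nhds hux)]
      with y hyd hy
    have hw : 0 < q * u y ^ (-q - 1) := mul_pos hq (Real.rpow_pos_of_pos hy _)
    rw [flux_comp_neg, gradient_comp_of_hasDerivAt (Real.hasDerivAt_rpow_const (Or.inl hy.ne'))
      (hyd.differentiableAt two_ne_zero), ← neg_smul, ← neg_mul, neg_neg,
      hH.flux_smul p hw (hH0 _), Real.mul_rpow hq.le (Real.rpow_nonneg hy.le _),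
      ← Real.rpow_mul hy.le, neg_smul]
  have hφ : HasFDerivAt (fun y => -(q ^ (p - 1) * u y ^ α))
      ((-(q ^ (p - 1) * (α * u x ^ (α - 1)))) • fderiv ℝ u x) x :=
    ((Real.hasDerivAt_rpow_const (Or.inl hux.ne')).const_mul _).neg.comp_hasFDerivAt x
      (hu.differentiableAt two_ne_zero).hasFDerivAt
  rw [hflux.divergence_eq,
    divergence_smul (A := fun y => flux H p (gradient u y)) hφ.differentiableAt
        ((hH2.differentiableAt_flux p hHx.ne').comp x hu.differentiableAt_gradient), hφ.fderiv,
      smul_apply, ← inner_gradient_left,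
      hH.inner_flux p (hH2.differentiableAt two_ne_zero) hHx, smul_eq_mul]
  ring

end Divergence

theorem stmt_10_general
    (n : ℕ) (p : ℝ) (hp : 1 < p) (hpn : p < (n : ℝ))
    -- the gauge H, smooth away from the origin
    (H : EuclideanSpace ℝ (Fin n) → ℝ)
    (hH_hom : ∀ t : ℝ, 0 < t → ∀ ξ : EuclideanSpace ℝ (Fin n), H (t • ξ) = t * H ξ)
    (hH_pos : ∀ ξ : EuclideanSpace ℝ (Fin n), ξ ≠ 0 → 0 < H ξ)
    (hH_smooth : ContDiffOn ℝ (⊤ : ℕ∞) H {(0 : EuclideanSpace ℝ (Fin n))}ᶜ)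
    -- a(ξ) = H(ξ)^{p-1} ∇H(ξ), Ĥ(ξ) = H(-ξ), â(ξ) = Ĥ(ξ)^{p-1} ∇Ĥ(ξ)
    (a : EuclideanSpace ℝ (Fin n) → EuclideanSpace ℝ (Fin n))
    (ha : ∀ ξ : EuclideanSpace ℝ (Fin n), a ξ = H ξ ^ (p - 1) • gradient H ξ)
    (Hh : EuclideanSpace ℝ (Fin n) → ℝ)
    (hHh : ∀ ξ : EuclideanSpace ℝ (Fin n), Hh ξ = H (-ξ))
    (ah : EuclideanSpace ℝ (Fin n) → EuclideanSpace ℝ (Fin n))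
    (hah : ∀ ξ : EuclideanSpace ℝ (Fin n), ah ξ = Hh ξ ^ (p - 1) • gradient Hh ξ)
    -- the open set, the nonlinearity, and u
    (Ω : Set (EuclideanSpace ℝ (Fin n))) (hΩ_open : IsOpen Ω)
    (f : ℝ → ℝ)
    (u : EuclideanSpace ℝ (Fin n) → ℝ) (hu : ContDiffOn ℝ 2 u Ω)
    (hu_pos : ∀ x ∈ Ω, 0 < u x)
    (hu_grad : ∀ x ∈ Ω, gradient u x ≠ 0)
    -- u solves div(a(∇u)) + f(u) = 0 pointwise in Ω
    (hu_sol : ∀ x ∈ Ω,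
      (∑ i : Fin n, fderiv ℝ (fun y => a (gradient u y) i) x (EuclideanSpace.single i 1)) +
        f (u x) = 0)
    -- v = u^{-p/(n-p)}
    (v : EuclideanSpace ℝ (Fin n) → ℝ)
    (hv_def : ∀ x : EuclideanSpace ℝ (Fin n), v x = u x ^ (-(p / ((n : ℝ) - p)))) :
    -- conclusion: Δ_p^Ĥ v = f̂(v) + (n(p-1)/p) Ĥ(∇v)^p / v pointwise in Ω
    ∀ x ∈ Ω,
      (∑ i : Fin n, fderiv ℝ (fun y => ah (gradient v y) i) x (EuclideanSpace.single i 1)) =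
        (p / ((n : ℝ) - p)) ^ (p - 1) * f (v x ^ (-(((n : ℝ) - p) / p))) *
            v x ^ ((n : ℝ) * (p - 1) / p) +
          ((n : ℝ) * (p - 1) / p) * Hh (gradient v x) ^ p / v x := by
  intro x hx
  set q := p / ((n : ℝ) - p) with hq_def
  have hq : 0 < q := div_pos (by linarith) (sub_pos.2 hpn)
  have hH0 := IsPosHomogeneous.nonneg hH_hom hH_pos
  obtain rfl : a = flux H p := funext ha
  obtain rfl : Hh = fun ξ => H (-ξ) := funext hHh
  obtain rfl : ah = flux (fun ξ => H (-ξ)) p := funext hah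
  obtain rfl : v = fun y => u y ^ (-q) := funext hv_def
  have hux := hu_pos x hx
  have hu2 : ContDiffAt ℝ 2 u x := hu.contDiffAt (hΩ_open.mem_nhds hx)
  have hH2 : ContDiffAt ℝ 2 H (gradient u x) :=
    (hH_smooth.contDiffAt (isOpen_compl_singleton.mem_nhds (hu_grad x hx))).of_le
      (WithTop.coe_le_coe.2 le_top)
  have hsol : divergence (fun y => flux H p (gradient u y)) x = -f (u x) :=
    eq_neg_of_add_eq_zero_left (hu_sol x hx)
  change divergence _ x = _
  rw [divergence_flux_comp_neg_gradient_rpow hH_hom hH0 p hu2 hux hH2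
    (hH_pos _ (hu_grad x hx)) hq, hsol,
    gradient_comp_of_hasDerivAt (Real.hasDerivAt_rpow_const (Or.inl hux.ne'))
      (hu2.differentiableAt two_ne_zero)]
  have hgrad_neg :
      -((-q * u x ^ (-q - 1)) • gradient u x) = (q * u x ^ (-q - 1)) • gradient u x := by
    rw [neg_mul, neg_smul, neg_neg]
  beta_reduce
  rw [hgrad_neg, hH_hom _ (mul_pos hq (Real.rpow_pos_of_pos hux _))]
  exact rpow_substitution_identity (by linarith) hpn hq_def hux (hH0 _) f

/-- The substitution `v = u^{-p/(n-p)}`: if `u ∈ C²(Ω)` is positive with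
nonvanishing gradient and solves `div(a(∇u)) + f(u) = 0` pointwise, then `v` solves
`Δ_p^Ĥ v = f̂(v) + (n(p-1)/p) Ĥ(∇v)^p / v` pointwise, where `Δ_p^Ĥ v = div(â(∇v))`,
`â(ξ) = Ĥ(ξ)^{p-1}∇Ĥ(ξ)`, `Ĥ(ξ) = H(-ξ)` and
`f̂(t) = (p/(n-p))^{p-1} f(t^{-(n-p)/p}) t^{n(p-1)/p}`. -/
theorem stmt_10
    (n : ℕ) (hn : 2 ≤ n) (p : ℝ) (hp : 1 < p) (hpn : p < (n : ℝ))
    -- the gauge H, smooth away from the origin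
    (H : EuclideanSpace ℝ (Fin n) → ℝ)
    (hH_conv : ConvexOn ℝ Set.univ H)
    (hH_hom : ∀ t : ℝ, 0 < t → ∀ ξ : EuclideanSpace ℝ (Fin n), H (t • ξ) = t * H ξ)
    (hH_pos : ∀ ξ : EuclideanSpace ℝ (Fin n), ξ ≠ 0 → 0 < H ξ)
    (hH_smooth : ContDiffOn ℝ (⊤ : ℕ∞) H {(0 : EuclideanSpace ℝ (Fin n))}ᶜ)
    -- a(ξ) = H(ξ)^{p-1} ∇H(ξ), Ĥ(ξ) = H(-ξ), â(ξ) = Ĥ(ξ)^{p-1} ∇Ĥ(ξ)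
    (a : EuclideanSpace ℝ (Fin n) → EuclideanSpace ℝ (Fin n))
    (ha : ∀ ξ : EuclideanSpace ℝ (Fin n), a ξ = H ξ ^ (p - 1) • gradient H ξ)
    (Hh : EuclideanSpace ℝ (Fin n) → ℝ)
    (hHh : ∀ ξ : EuclideanSpace ℝ (Fin n), Hh ξ = H (-ξ))
    (ah : EuclideanSpace ℝ (Fin n) → EuclideanSpace ℝ (Fin n))
    (hah : ∀ ξ : EuclideanSpace ℝ (Fin n), ah ξ = Hh ξ ^ (p - 1) • gradient Hh ξ)
    -- the open set, the nonlinearity, and u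
    (Ω : Set (EuclideanSpace ℝ (Fin n))) (hΩ_open : IsOpen Ω)
    (f : ℝ → ℝ) (hf : Continuous f)
    (u : EuclideanSpace ℝ (Fin n) → ℝ) (hu : ContDiffOn ℝ 2 u Ω)
    (hu_pos : ∀ x ∈ Ω, 0 < u x)
    (hu_grad : ∀ x ∈ Ω, gradient u x ≠ 0)
    -- u solves div(a(∇u)) + f(u) = 0 pointwise in Ω
    (hu_sol : ∀ x ∈ Ω,
      (∑ i : Fin n, fderiv ℝ (fun y => a (gradient u y) i) x (EuclideanSpace.single i 1)) +
        f (u x) = 0)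
    -- v = u^{-p/(n-p)}
    (v : EuclideanSpace ℝ (Fin n) → ℝ)
    (hv_def : ∀ x : EuclideanSpace ℝ (Fin n), v x = u x ^ (-(p / ((n : ℝ) - p)))) :
    -- conclusion: Δ_p^Ĥ v = f̂(v) + (n(p-1)/p) Ĥ(∇v)^p / v pointwise in Ω
    ∀ x ∈ Ω,
      (∑ i : Fin n, fderiv ℝ (fun y => ah (gradient v y) i) x (EuclideanSpace.single i 1)) =
        (p / ((n : ℝ) - p)) ^ (p - 1) * f (v x ^ (-(((n : ℝ) - p) / p))) *
            v x ^ ((n : ℝ) * (p - 1) / p) +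
          ((n : ℝ) * (p - 1) / p) * Hh (gradient v x) ^ p / v x :=
  stmt_10_general n p hp hpn H hH_hom hH_pos hH_smooth a ha Hh hHh ah hah Ω hΩ_open f u hu hu_pos
    hu_grad hu_sol v hv_def
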